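/- arXiv:2212.11748 — 2 statements merged into one kernel-verified Lean document; each statement's English description precedes it below -/
import Mathlib

section
/- On the reference tetrahedron T with barycentric coordinates λ₁, λ₂, λ₃, λ₄, for each i ∈ {1,2,3,4} the polynomial φᵢ = 5λᵢ³ − 5λᵢ² + λᵢ satisfies ∫_F φᵢ q ds = 0 for every face F of T and every polynomial q on F of degree at most 1. -/
/-
Parametrize the face by the affine map `y ↦ (1 - y₀ - y₁) b₀ + y₀ b₁ + y₁ b₂` on the corner
triangle, listing the vertices so that `b₁ = aᵢ` when `i ≠ F`. On the face, the 2-dimensional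
Hausdorff measure is the push-forward of a constant multiple of Lebesgue measure under this map,
and a polynomial of degree `≤ 1` is affine in the barycentric weights. So the integral is a
multiple of `∫ φ(y₀) (α + β y₀ + γ y₁)` over the triangle, where `φ t = 5t³ - 5t² + t`
(when `i = F`, `λᵢ` vanishes on the face and so does the integrand). Integrating out `y₁` leaves
`∫₀¹ φ(t) (1 - t) (a + b t) dt`, which vanishes because `φ(t) (1 - t) = (t³(1 - t)³)'' / 6`.
-/

open MeasureTheory MvPolynomial
open scoped RealInnerProductSpace

noncomputable section

/-- Euclidean 3-space. -/
abbrev E3 := EuclideanSpace ℝ (Fin 3)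

/-- Evaluate a polynomial in 3 variables at a point of `E3`. -/
def evalP (x : E3) (p : MvPolynomial (Fin 3) ℝ) : ℝ :=
  MvPolynomial.eval (fun j => x j) p

/-- The (closed) facet of the tetrahedron opposite to vertex `i`. -/
def face (a : Fin 4 → E3) (i : Fin 4) : Set E3 :=
  convexHull ℝ (a '' {j | j ≠ i})

/-- The (closed) tetrahedron with vertices `a`. -/
def tetra (a : Fin 4 → E3) : Set E3 :=
  convexHull ℝ (Set.range a)

namespace MvPolynomial

variable {σ R ι : Type*} [CommRing R]

theorem prod_pow_sum_smul_of_degree_le_one {d : σ →₀ ℕ} (hd : d.degree ≤ 1) (s : Finset ι)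
    {w : ι → R} (hw : ∑ i ∈ s, w i = 1) (x : ι → σ → R) :
    (d.prod fun j k => (∑ i ∈ s, w i • x i) j ^ k) =
      ∑ i ∈ s, w i * d.prod fun j k => x i j ^ k := by
  rcases Nat.le_one_iff_eq_zero_or_eq_one.1 hd with h | h
  · simp [(Finsupp.degree_eq_zero_iff d).1 h, hw]
  · obtain ⟨j, rfl⟩ : d ∈ Set.range (Finsupp.single · 1) := Finsupp.range_single_one.symm ▸ h
    simp [Finset.sum_apply]

theorem eval_sum_smul_of_totalDegree_le_one {q : MvPolynomial σ R} (hq : q.totalDegree ≤ 1)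
    (s : Finset ι) {w : ι → R} (hw : ∑ i ∈ s, w i = 1) (x : ι → σ → R) :
    eval (∑ i ∈ s, w i • x i) q = ∑ i ∈ s, w i * eval (x i) q := by
  have hdeg : ∀ d ∈ q.support, d.degree ≤ 1 := fun d hd => (le_totalDegree hd).trans hq
  simp only [eval_eq]
  calc ∑ d ∈ q.support, q.coeff d * ∏ j ∈ d.support, (∑ i ∈ s, w i • x i) j ^ d j
      = ∑ d ∈ q.support, q.coeff d * ∑ i ∈ s, w i * ∏ j ∈ d.support, x i j ^ d j :=
        Finset.sum_congr rfl fun d hd => by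
          rw [← Finsupp.prod, prod_pow_sum_smul_of_degree_le_one (hdeg d hd) s hw]; rfl
    _ = _ := by
      simp only [Finset.mul_sum]
      rw [Finset.sum_comm]
      exact Finset.sum_congr rfl fun i _ => Finset.sum_congr rfl fun d _ => mul_left_comm _ _ _

end MvPolynomial

theorem Fin.exists_injective_range_eq_ne {n : ℕ} (F i : Fin (n + 1)) (m : Fin n) :
    ∃ e : Fin n → Fin (n + 1), Function.Injective e ∧ Set.range e = {j | j ≠ F} ∧
      (i ≠ F → e m = i) := by
  have hrange : Set.range F.succAbove = {j | j ≠ F} := by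
    rw [Fin.range_succAbove]; rfl
  by_cases hiF : i = F
  · exact ⟨F.succAbove, Fin.succAbove_right_injective, hrange, fun h => absurd hiF h⟩
  · obtain ⟨k, rfl⟩ := Fin.exists_succAbove_eq hiF
    refine ⟨F.succAbove ∘ Equiv.swap m k,
      Fin.succAbove_right_injective.comp (Equiv.injective _), ?_, fun _ => by simp⟩
    rw [Set.range_comp, (Equiv.swap m k).range_eq_univ, Set.image_univ, hrange]

theorem AffineMap.isClosedEmbedding_of_injective {U V : Type*} [NormedAddCommGroup U]
    [NormedSpace ℝ U] [FiniteDimensional ℝ U] [NormedAddCommGroup V] [NormedSpace ℝ V]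
    {A : U →ᵃ[ℝ] V} (hA : Function.Injective A) : Topology.IsClosedEmbedding A := by
  have hlin : Topology.IsClosedEmbedding A.linear :=
    LinearMap.isClosedEmbedding_of_injective
      (LinearMap.ker_eq_bot.2 (A.linear_injective_iff.2 hA))
  rw [A.decomp]
  exact (Homeomorph.addRight (A 0)).isClosedEmbedding.comp hlin

section HausdorffImage

open Set Module Measure

variable {U V G : Type*} [NormedAddCommGroup U] [InnerProductSpace ℝ U] [FiniteDimensional ℝ U]
  [MeasurableSpace U] [BorelSpace U] [NormedAddCommGroup V] [InnerProductSpace ℝ V]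
  [MeasurableSpace V] [BorelSpace V] {A : U →ᵃ[ℝ] V}

theorem AffineMap.restrict_range_hausdorffMeasure (hA : Function.Injective A) :
    (μH[finrank ℝ U] : Measure V).restrict (range A) =
      ENNReal.ofReal A.linear.normDet • (μH[finrank ℝ U] : Measure U).map A := by
  ext t ht
  have hAt : A '' (A ⁻¹' t) = IsometryEquiv.addRight (A 0) '' (A.linear '' (A ⁻¹' t)) := by
    rw [image_image]
    exact image_congr fun x _ => congrFun A.decomp x
  rw [restrict_apply ht, ← image_preimage_eq_inter_range, Measure.smul_apply,
    map_apply (AffineMap.isClosedEmbedding_of_injective hA).continuous.measurable ht, hAt,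
    (IsometryEquiv.addRight (A 0)).hausdorffMeasure_image, A.linear.hausdorffMeasure_image,
    smul_eq_mul]

theorem AffineMap.setIntegral_image_hausdorffMeasure [NormedAddCommGroup G] [NormedSpace ℝ G]
    (hA : Function.Injective A) (s : Set U) (g : V → G) :
    ∫ x in A '' s, g x ∂μH[finrank ℝ U] =
      A.linear.normDet • ∫ y in s, g (A y) ∂μH[finrank ℝ U] := by
  rw [← restrict_restrict_of_subset (image_subset_range A s), restrict_range_hausdorffMeasure hA,
    restrict_smul, integral_smul_measure, ENNReal.toReal_ofReal A.linear.normDet_nonneg,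
    (AffineMap.isClosedEmbedding_of_injective hA).measurableEmbedding.setIntegral_map,
    preimage_image_eq s hA]

end HausdorffImage

section CornerSimplex

open Set

def cornerSimplex (n : ℕ) : Set (EuclideanSpace ℝ (Fin n)) :=
  {y | (∀ k, 0 ≤ y k) ∧ ∑ k, y k ≤ 1}

theorem convex_cornerSimplex (n : ℕ) : Convex ℝ (cornerSimplex n) := by
  rintro x ⟨hx₀, hx₁⟩ y ⟨hy₀, hy₁⟩ s t hs ht hst
  refine ⟨fun k => ?_, ?_⟩
  · simp only [PiLp.add_apply, PiLp.smul_apply, smul_eq_mul]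
    have := hx₀ k; have := hy₀ k; positivity
  · simp only [PiLp.add_apply, PiLp.smul_apply, smul_eq_mul, Finset.sum_add_distrib,
      ← Finset.mul_sum]
    nlinarith

variable {V : Type*} [AddCommGroup V] [Module ℝ V] {n : ℕ}

def barycentric (y : EuclideanSpace ℝ (Fin n)) : Fin (n + 1) → ℝ :=
  Fin.cons (1 - ∑ k, y k) y

theorem sum_barycentric (y : EuclideanSpace ℝ (Fin n)) : ∑ k, barycentric y k = 1 := by
  simp [barycentric, Fin.sum_univ_succ]

def simplexParam (b : Fin (n + 1) → V) : EuclideanSpace ℝ (Fin n) →ᵃ[ℝ] V :=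
  (Fintype.linearCombination ℝ (fun k => b k.succ - b 0) ∘ₗ
    (WithLp.linearEquiv 2 ℝ (Fin n → ℝ)).toLinearMap).toAffineMap + AffineMap.const ℝ _ (b 0)

theorem simplexParam_apply (b : Fin (n + 1) → V) (y : EuclideanSpace ℝ (Fin n)) :
    simplexParam b y = ∑ k, barycentric y k • b k := by
  change ∑ k, y k • (b k.succ - b 0) + b 0 = _
  simp only [Fin.sum_univ_succ, barycentric, Fin.cons_zero, Fin.cons_succ, smul_sub,
    Finset.sum_sub_distrib, sub_smul, one_smul, ← Finset.sum_smul]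
  abel

theorem simplexParam_injective {b : Fin (n + 1) → V} (hb : AffineIndependent ℝ b) :
    Function.Injective (simplexParam b) := by
  intro y y' h
  simp only [simplexParam_apply] at h
  have hw := (affineIndependent_iff_eq_of_fintype_affineCombination_eq ℝ b).1 hb _ _
    (sum_barycentric y) (sum_barycentric y') (by
      rwa [Finset.affineCombination_eq_linear_combination _ _ _ (sum_barycentric y),
        Finset.affineCombination_eq_linear_combination _ _ _ (sum_barycentric y')])
  ext k
  simpa [barycentric] using congrFun hw k.succ

theorem convexHull_range_eq_image_cornerSimplex (b : Fin (n + 1) → V) :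
    convexHull ℝ (range b) = simplexParam b '' cornerSimplex n := by
  refine subset_antisymm (convexHull_min ?_ ((convex_cornerSimplex n).affine_image _)) ?_
  · rintro _ ⟨k, rfl⟩
    induction k using Fin.cases with
    | zero => exact ⟨0, by simp [cornerSimplex], by simp [simplexParam]⟩
    | succ k =>
      refine ⟨EuclideanSpace.single k 1, ⟨fun j => ?_, by simp⟩, ?_⟩
      · by_cases hj : j = k <;> simp [hj]
      · simp [simplexParam, Fintype.linearCombination_apply]
  · rintro _ ⟨y, ⟨hy₀, hy₁⟩, rfl⟩
    rw [simplexParam_apply]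
    refine mem_convexHull_of_exists_fintype _ b (fun k => ?_) (sum_barycentric y)
      (fun k => mem_range_self k) rfl
    induction k using Fin.cases with
    | zero => simpa [barycentric] using hy₁
    | succ k => simpa [barycentric] using hy₀ k

end CornerSimplex

section TriangleIntegral

open Set

theorem setIntegral_prod_fiberwise {α β E : Type*} [MeasurableSpace α] [MeasurableSpace β]
    {μ : Measure α} {ν : Measure β} [SFinite μ] [SFinite ν] [NormedAddCommGroup E]
    [NormedSpace ℝ E] {s : Set α} {t : α → Set β}
    (hR : MeasurableSet {p : α × β | p.1 ∈ s ∧ p.2 ∈ t p.1}) (hs : MeasurableSet s)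
    (ht : ∀ x, MeasurableSet (t x)) {f : α × β → E}
    (hf : IntegrableOn f {p | p.1 ∈ s ∧ p.2 ∈ t p.1} (μ.prod ν)) :
    ∫ p in {p | p.1 ∈ s ∧ p.2 ∈ t p.1}, f p ∂(μ.prod ν) =
      ∫ x in s, ∫ y in t x, f (x, y) ∂ν ∂μ := by
  rw [← integral_indicator hR, integral_prod _ ((integrable_indicator_iff hR).2 hf),
    ← integral_indicator hs]
  congr 1
  funext x
  by_cases hx : x ∈ s
  · rw [indicator_of_mem hx, ← integral_indicator (ht x)]
    congr 1
    funext y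
    by_cases hy : y ∈ t x
    · rw [indicator_of_mem hy, indicator_of_mem (show (x, y) ∈ {p : α × β | p.1 ∈ s ∧ p.2 ∈ t p.1}
        from ⟨hx, hy⟩)]
    · rw [indicator_of_notMem hy, indicator_of_notMem fun h => hy h.2]
  · simp [hx]

theorem intervalIntegral_const_add_mul_id (p g c : ℝ) :
    ∫ y in (0 : ℝ)..c, (p + g * y) = p * c + g * c ^ 2 / 2 := by
  rw [intervalIntegral.integral_add intervalIntegrable_const
      ((continuous_const_mul g).intervalIntegrable _ _),
    intervalIntegral.integral_const_mul, integral_id, intervalIntegral.integral_const,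
    smul_eq_mul]
  ring

theorem intervalIntegral_bubble_mul_one_sub_mul_affine (a b : ℝ) :
    ∫ x in (0 : ℝ)..1, (5 * x ^ 3 - 5 * x ^ 2 + x) * (1 - x) * (a + b * x) = 0 := by
  -- `H t = t³(1-t)³` has `H'' = 6 t (1-t) (5t² - 5t + 1)`, and two integrations by parts against
  -- the affine `p = a + b t` give the antiderivative `G = (H' p - H p') / 6`, zero at `0` and `1`.
  let t : Polynomial ℝ := Polynomial.X
  let G : Polynomial ℝ := t ^ 2 * (1 - t) ^ 2 *
    (Polynomial.C (1 / 2) * (1 - 2 * t) * (Polynomial.C a + Polynomial.C b * t) -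
      Polynomial.C (b / 6) * t * (1 - t))
  have hG : ∀ x, HasDerivAt (fun x => G.eval x)
      ((5 * x ^ 3 - 5 * x ^ 2 + x) * (1 - x) * (a + b * x)) x := fun x =>
    (G.hasDerivAt x).congr_deriv (by simp [G, t, Polynomial.derivative_pow]; ring)
  rw [intervalIntegral.integral_eq_sub_of_hasDerivAt (fun x _ => hG x)
    (Continuous.intervalIntegrable (by fun_prop) _ _)]
  simp [G, t]

theorem setIntegral_cornerSimplex_two (g : ℝ → ℝ → ℝ) :
    ∫ y in cornerSimplex 2, g (y 0) (y 1) =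
      ∫ p in {p : ℝ × ℝ | p.1 ∈ Icc 0 1 ∧ p.2 ∈ Icc 0 (1 - p.1)}, g p.1 p.2 := by
  let e : EuclideanSpace ℝ (Fin 2) ≃ᵐ ℝ × ℝ :=
    (MeasurableEquiv.toLp 2 (Fin 2 → ℝ)).symm.trans MeasurableEquiv.finTwoArrow
  have he : MeasurePreserving e.symm :=
    ((volume_preserving_finTwoArrow ℝ).comp
      (EuclideanSpace.volume_preserving_symm_measurableEquiv_toLp (Fin 2))).symm e
  have hpre : e.symm ⁻¹' cornerSimplex 2 =
      {p : ℝ × ℝ | p.1 ∈ Icc 0 1 ∧ p.2 ∈ Icc 0 (1 - p.1)} := by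
    ext p
    have hcoord : e.symm p 0 = p.1 ∧ e.symm p 1 = p.2 := ⟨rfl, rfl⟩
    simp only [cornerSimplex, mem_preimage, mem_ofPred_eq, Fin.forall_fin_two, Fin.sum_univ_two,
      hcoord, mem_Icc]
    exact ⟨fun ⟨⟨h₁, h₂⟩, h₃⟩ => ⟨⟨h₁, by linarith⟩, h₂, by linarith⟩,
      fun ⟨⟨h₁, _⟩, h₂, h₃⟩ => ⟨⟨h₁, h₂⟩, by linarith⟩⟩
  rw [← he.setIntegral_preimage_emb e.symm.measurableEmbedding, hpre]
  rfl

theorem isCompact_triangle :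
    IsCompact {p : ℝ × ℝ | p.1 ∈ Icc 0 1 ∧ p.2 ∈ Icc 0 (1 - p.1)} := by
  refine (isCompact_Icc.prod (isCompact_Icc (a := (0 : ℝ)) (b := 1))).of_isClosed_subset ?_
    fun p ⟨⟨h₁, h₂⟩, h₃, h₄⟩ => ⟨⟨h₁, h₂⟩, h₃, by linarith⟩
  simp only [mem_Icc, ofPred_and]
  refine ((isClosed_le ?_ ?_).inter (isClosed_le ?_ ?_)).inter
    ((isClosed_le ?_ ?_).inter (isClosed_le ?_ ?_)) <;> fun_prop

theorem integral_cornerSimplex_two_bubble_mul_affine (α β γ : ℝ) :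
    ∫ y in cornerSimplex 2, (5 * y 0 ^ 3 - 5 * y 0 ^ 2 + y 0) * (α + β * y 0 + γ * y 1) = 0 := by
  rw [setIntegral_cornerSimplex_two
      (fun u v => (5 * u ^ 3 - 5 * u ^ 2 + u) * (α + β * u + γ * v)),
    Measure.volume_eq_prod, setIntegral_prod_fiberwise isCompact_triangle.isClosed.measurableSet
      measurableSet_Icc (fun _ => measurableSet_Icc)
      (ContinuousOn.integrableOn_compact isCompact_triangle (by fun_prop))]
  have hslice : ∀ x ∈ Icc (0 : ℝ) 1,
      ∫ y in Icc 0 (1 - x), (5 * x ^ 3 - 5 * x ^ 2 + x) * (α + β * x + γ * y) =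
        (5 * x ^ 3 - 5 * x ^ 2 + x) * (1 - x) * ((α + γ / 2) + (β - γ / 2) * x) := by
    rintro x ⟨-, hx⟩
    rw [integral_Icc_eq_integral_Ioc, ← intervalIntegral.integral_of_le (by linarith),
      intervalIntegral.integral_const_mul, intervalIntegral_const_add_mul_id]
    ring
  rw [setIntegral_congr_fun measurableSet_Icc hslice, integral_Icc_eq_integral_Ioc,
    ← intervalIntegral.integral_of_le zero_le_one, intervalIntegral_bubble_mul_one_sub_mul_affine]

end TriangleIntegral

theorem evalP_cubic (x : E3) (l : MvPolynomial (Fin 3) ℝ) :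
    evalP x (5 * l ^ 3 - 5 * l ^ 2 + l) = 5 * evalP x l ^ 3 - 5 * evalP x l ^ 2 + evalP x l := by
  simp [evalP]

theorem evalP_simplexParam {n : ℕ} (b : Fin (n + 1) → E3) {r : MvPolynomial (Fin 3) ℝ}
    (hr : r.totalDegree ≤ 1) (y : EuclideanSpace ℝ (Fin n)) :
    evalP (simplexParam b y) r = ∑ k, barycentric y k * evalP (b k) r := by
  have hcoord : (fun j => (∑ k, barycentric y k • b k) j) =
      ∑ k, barycentric y k • fun j => b k j := by
    ext j
    simp
  simp only [evalP, simplexParam_apply, hcoord]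
  exact eval_sum_smul_of_totalDegree_le_one hr _ (sum_barycentric y) _

/-- the cubic bubbles `φᵢ = 5λᵢ³ − 5λᵢ² + λᵢ` have vanishing
first-order moments on every facet of the tetrahedron. -/
theorem stmt0 (a : Fin 4 → E3) (hind : AffineIndependent ℝ a)
    (lam : Fin 4 → MvPolynomial (Fin 3) ℝ)
    (hdeg : ∀ i, (lam i).totalDegree ≤ 1)
    (hval : ∀ i j, evalP (a j) (lam i) = if i = j then 1 else 0)
    (i : Fin 4) :
    ∀ (F : Fin 4) (q : MvPolynomial (Fin 3) ℝ), q.totalDegree ≤ 1 →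
      ∫ x in face a F,
        evalP x (5 * lam i ^ 3 - 5 * lam i ^ 2 + lam i) * evalP x q ∂(μH[2]) = 0 := by
  intro F q hq
  obtain ⟨e, he, hrange, hei⟩ := Fin.exists_injective_range_eq_ne F i 1
  have hface : face a F = simplexParam (a ∘ e) '' cornerSimplex 2 := by
    rw [face, ← hrange, ← Set.range_comp, convexHull_range_eq_image_cornerSimplex]
  have hb : AffineIndependent ℝ (a ∘ e) := hind.comp_embedding ⟨e, he⟩
  have hdim : (2 : ℝ) = Module.finrank ℝ (EuclideanSpace ℝ (Fin 2)) := by simp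
  rw [hface, hdim, AffineMap.setIntegral_image_hausdorffMeasure (simplexParam_injective hb),
    Measure.isAddLeftInvariant_eq_smul μH[_] volume, Measure.restrict_smul,
    integral_smul_nnreal_measure]
  suffices h : ∫ y in cornerSimplex 2, evalP (simplexParam (a ∘ e) y)
      (5 * lam i ^ 3 - 5 * lam i ^ 2 + lam i) * evalP (simplexParam (a ∘ e) y) q = 0 by
    rw [h, smul_zero, smul_zero]
  simp only [evalP_cubic, evalP_simplexParam _ (hdeg i), evalP_simplexParam _ hq,
    Function.comp_apply, hval]
  by_cases hiF : i = F
  · have hne : ∀ k, i ≠ e k := fun k h => (hrange ▸ Set.mem_range_self k : e k ∈ {j | j ≠ F})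
      (h ▸ hiF)
    simp [hne]
  · have hvert : ∀ k, i = e k ↔ k = 1 := fun k => by rw [← hei hiF, he.eq_iff, eq_comm]
    simp only [hvert, mul_ite, mul_one, mul_zero, Finset.sum_ite_eq', Finset.mem_univ, if_true,
      Fin.sum_univ_succ, Finset.univ_unique, Finset.sum_singleton, barycentric, Fin.cons_zero,
      Fin.cons_succ, Fin.default_eq_zero, Fin.succ_zero_eq_one, Fin.succ_one_eq_two, Fin.cons_one]
    convert integral_cornerSimplex_two_bubble_mul_affine (evalP (a (e 0)) q)
      (evalP (a (e 1)) q - evalP (a (e 0)) q) (evalP (a (e 2)) q - evalP (a (e 0)) q) using 3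
    ring
end
end

section
/- On the reference tetrahedron T, for each i ∈ {1,2,3,4} the polynomial φᵢ = −2λᵢ² + 4λᵢ − 2 + 3·∑_{j≠i} λⱼ² + 30·∏_{j≠i} λⱼ satisfies ∫_F φᵢ q ds = 0 for every face F of T and every polynomial q on F of degree at most 1. -/
/-!
Each facet is the image of the unit triangle `{s, t ≥ 0, s + t ≤ 1}` under an injective affine
map, and on the plane of the facet `μH[2]` is a constant multiple of the push-forward of Lebesgue
measure, so every facet integral is a multiple of an integral over the unit triangle.

Write `μ₀, μ₁, μ₂` for the barycentric coordinates of a facet. On the facet opposite vertex `i`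
the bubble restricts to `3 (μ₀² + μ₁² + μ₂²) - 2 + 30 μ₀ μ₁ μ₂`. On any other facet `λᵢ` is one of
the `μ`'s, say `μ₀`, and the product term vanishes, so the bubble restricts to
`μ₁² + μ₂² - 4 μ₁ μ₂`. Both restrictions are orthogonal to the affine functions, by direct
integration over the triangle. Relabelling the vertices reduces every pair (`i`, facet) to one of
these two cases on the facet opposite the last vertex.
-/

open MeasureTheory MvPolynomial
open scoped RealInnerProductSpace

noncomputable section

open Set Module
open scoped NNReal

def unitTriangle : Set (ℝ × ℝ) := {p | 0 ≤ p.1 ∧ 0 ≤ p.2 ∧ p.1 + p.2 ≤ 1}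

theorem convex_unitTriangle : Convex ℝ unitTriangle := by
  rintro ⟨x, y⟩ ⟨hx, hy, hxy⟩ ⟨x', y'⟩ ⟨hx', hy', hxy'⟩ a b ha hb hab
  refine ⟨?_, ?_, ?_⟩ <;> simp only [Prod.smul_mk, Prod.mk_add_mk, smul_eq_mul]
  · positivity
  · positivity
  · nlinarith

theorem isClosed_unitTriangle : IsClosed unitTriangle :=
  (isClosed_le continuous_const continuous_fst).inter <|
    (isClosed_le continuous_const continuous_snd).inter <|
      isClosed_le (continuous_fst.add continuous_snd) continuous_const

theorem isCompact_unitTriangle : IsCompact unitTriangle :=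
  (isCompact_Icc (a := ((0 : ℝ), (0 : ℝ))) (b := (1, 1))).of_isClosed_subset isClosed_unitTriangle
    fun _ ⟨h₁, h₂, h₁₂⟩ => ⟨Prod.le_def.2 ⟨h₁, h₂⟩, Prod.le_def.2 ⟨by linarith, by linarith⟩⟩

theorem setIntegral_unitTriangle {f : ℝ × ℝ → ℝ} (hf : Continuous f) :
    ∫ p in unitTriangle, f p = ∫ x in (0 : ℝ)..1, ∫ y in (0 : ℝ)..(1 - x), f (x, y) := by
  have hT := isClosed_unitTriangle.measurableSet
  have hslice : ∀ x, ∫ y, unitTriangle.indicator f (x, y) =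
      (Icc 0 1).indicator (fun x => ∫ y in (0 : ℝ)..(1 - x), f (x, y)) x := by
    intro x
    by_cases hx : x ∈ Icc (0 : ℝ) 1
    · have : (fun y => unitTriangle.indicator f (x, y)) = (Icc 0 (1 - x)).indicator (f ⟨x, ·⟩) := by
        ext y
        simp only [indicator_apply, unitTriangle, mem_ofPred_eq, mem_Icc]
        exact if_congr ⟨fun h => ⟨h.2.1, by linarith [h.2.2]⟩,
          fun h => ⟨hx.1, h.1, by linarith [h.2]⟩⟩ rfl rfl
      rw [indicator_of_mem hx, this, integral_indicator measurableSet_Icc,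
        integral_Icc_eq_integral_Ioc, ← intervalIntegral.integral_of_le (by linarith [hx.2])]
    · rw [indicator_of_notMem hx]
      refine integral_eq_zero_of_ae (.of_forall fun y => indicator_of_notMem ?_ _)
      exact fun h => hx ⟨h.1, by linarith [h.2.1, h.2.2]⟩
  rw [← integral_indicator hT, Measure.volume_eq_prod, integral_prod _ ?_]
  · simp_rw [hslice]
    rw [integral_indicator measurableSet_Icc, integral_Icc_eq_integral_Ioc,
      ← intervalIntegral.integral_of_le zero_le_one]
  · rw [← Measure.volume_eq_prod, integrable_indicator_iff hT]
    exact hf.continuousOn.integrableOn_compact isCompact_unitTriangle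

namespace intervalIntegral

variable {E : Type*} [NormedAddCommGroup E] [NormedSpace ℝ E]

theorem integral_add_of_continuous {f g : ℝ → E} (hf : Continuous f) (hg : Continuous g)
    (a b : ℝ) : ∫ x in a..b, (f x + g x) = (∫ x in a..b, f x) + ∫ x in a..b, g x :=
  integral_add (hf.intervalIntegrable a b) (hg.intervalIntegrable a b)

theorem integral_sub_of_continuous {f g : ℝ → E} (hf : Continuous f) (hg : Continuous g)
    (a b : ℝ) : ∫ x in a..b, (f x - g x) = (∫ x in a..b, f x) - ∫ x in a..b, g x :=
  integral_sub (hf.intervalIntegrable a b) (hg.intervalIntegrable a b)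

/- `simp` does not unify `?f x` with the bare bound variable `x`, so the two shapes of linear
integrand that `ring_nf` produces get their own lemmas. -/
theorem integral_const_mul_id (a b c : ℝ) : ∫ x in a..b, c * x = c * ((b ^ 2 - a ^ 2) / 2) := by
  rw [integral_const_mul, integral_id]

theorem integral_const_sub_id (a b c : ℝ) :
    ∫ x in a..b, (c - x) = c * (b - a) - (b ^ 2 - a ^ 2) / 2 := by
  rw [integral_sub intervalIntegrable_const intervalIntegrable_id, integral_id, integral_const,
    smul_eq_mul, mul_comm]

end intervalIntegral

theorem setIntegral_unitTriangle_opposite_mul_affine_eq_zero (α β γ : ℝ) :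
    ∫ p in unitTriangle,
      (3 * ((1 - p.1 - p.2) ^ 2 + p.1 ^ 2 + p.2 ^ 2) - 2 + 30 * ((1 - p.1 - p.2) * p.1 * p.2))
        * ((1 - p.1 - p.2) * α + p.1 * β + p.2 * γ) = 0 := by
  rw [setIntegral_unitTriangle (by fun_prop)]
  iterate 2
    ring_nf
    simp (disch := fun_prop) only [intervalIntegral.integral_add_of_continuous,
      intervalIntegral.integral_sub_of_continuous, intervalIntegral.integral_mul_const,
      intervalIntegral.integral_const_mul, integral_pow, integral_id,
      intervalIntegral.integral_const_mul_id, intervalIntegral.integral_const_sub_id,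
      intervalIntegral.integral_const, smul_eq_mul]
  ring

theorem setIntegral_unitTriangle_adjacent_mul_affine_eq_zero (α β γ : ℝ) :
    ∫ p in unitTriangle, (p.1 ^ 2 + p.2 ^ 2 - 4 * p.1 * p.2)
        * ((1 - p.1 - p.2) * α + p.1 * β + p.2 * γ) = 0 := by
  rw [setIntegral_unitTriangle (by fun_prop)]
  iterate 2
    ring_nf
    simp (disch := fun_prop) only [intervalIntegral.integral_add_of_continuous,
      intervalIntegral.integral_sub_of_continuous, intervalIntegral.integral_mul_const,
      intervalIntegral.integral_const_mul, integral_pow, integral_id, intervalIntegral.integral_neg,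
      intervalIntegral.integral_const_mul_id, intervalIntegral.integral_const_sub_id,
      intervalIntegral.integral_const, smul_eq_mul]
  ring

section TriangleMap

variable {E : Type*} [AddCommGroup E] [Module ℝ E]

def triangleMap (p : Fin 3 → E) : ℝ × ℝ →ᵃ[ℝ] E where
  toFun st := (1 - st.1 - st.2) • p 0 + st.1 • p 1 + st.2 • p 2
  linear :=
    (LinearMap.fst ℝ ℝ ℝ).smulRight (p 1 - p 0) + (LinearMap.snd ℝ ℝ ℝ).smulRight (p 2 - p 0)
  map_vadd' st v := by
    simp only [vadd_eq_add, Prod.fst_add, Prod.snd_add, LinearMap.add_apply,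
      LinearMap.smulRight_apply, LinearMap.fst_apply, LinearMap.snd_apply]
    module

theorem triangleMap_apply (p : Fin 3 → E) (st : ℝ × ℝ) :
    triangleMap p st = (1 - st.1 - st.2) • p 0 + st.1 • p 1 + st.2 • p 2 := rfl

theorem triangleMap_injective {p : Fin 3 → E} (hp : AffineIndependent ℝ p) :
    Function.Injective (triangleMap p) := by
  rintro ⟨s, t⟩ ⟨s', t'⟩ h
  have hw := hp.eq_of_sum_eq_sum (s := Finset.univ) (w₁ := ![1 - s - t, s, t])
    (w₂ := ![1 - s' - t', s', t']) (by simp [Fin.sum_univ_three]; ring)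
    (by simpa [Fin.sum_univ_three, triangleMap_apply] using h)
  simpa using And.intro (hw 1 (Finset.mem_univ _)) (hw 2 (Finset.mem_univ _))

theorem image_triangleMap_unitTriangle (p : Fin 3 → E) :
    triangleMap p '' unitTriangle = convexHull ℝ (range p) := by
  apply Subset.antisymm
  · rintro _ ⟨⟨s, t⟩, ⟨hs, ht, hst⟩, rfl⟩
    refine mem_convexHull_of_exists_fintype ![1 - s - t, s, t] p ?_ ?_ mem_range_self ?_
    · intro k; fin_cases k <;> simp <;> linarith
    · simp [Fin.sum_univ_three]; ring
    · simp [Fin.sum_univ_three, triangleMap_apply]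
  · refine convexHull_min ?_ (convex_unitTriangle.affine_image _)
    rintro _ ⟨k, rfl⟩
    fin_cases k
    · exact ⟨(0, 0), by simp [unitTriangle], by simp [triangleMap_apply]⟩
    · exact ⟨(1, 0), by simp [unitTriangle], by simp [triangleMap_apply]⟩
    · exact ⟨(0, 1), by simp [unitTriangle], by simp [triangleMap_apply]⟩

end TriangleMap

section HausdorffMeasure

variable {F E : Type*} [NormedAddCommGroup F] [NormedSpace ℝ F] [FiniteDimensional ℝ F]
  [MeasurableSpace F] [BorelSpace F] (μ : Measure F) [μ.IsAddHaarMeasure]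
  [NormedAddCommGroup E] [NormedSpace ℝ E] [MeasurableSpace E] [BorelSpace E]

/- `Φ` is a linear equivalence onto the range `V` of its linear part followed by the isometry
`v ↦ v + Φ 0`, and on `V` the measure `μH[finrank ℝ F]` is an additive Haar measure. -/
theorem exists_hausdorffMeasure_restrict_range_eq_smul_map (Φ : F →ᵃ[ℝ] E)
    (hΦ : Function.Injective Φ) :
    ∃ c : ℝ≥0, (μH[finrank ℝ F] : Measure E).restrict (range Φ) = c • μ.map Φ := by
  set V := LinearMap.range Φ.linear
  let L : F ≃L[ℝ] V :=
    (LinearEquiv.ofInjective Φ.linear (Φ.linear_injective_iff.2 hΦ)).toContinuousLinearEquiv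
  let ι : V → E := fun v => (v : E) + Φ 0
  have hι : Isometry ι := (isometry_add_right (Φ 0)).comp isometry_subtype_coe
  have hΦι : ⇑Φ = ι ∘ L := by
    rw [Φ.decomp]; rfl
  have : (μH[finrank ℝ F] : Measure V).IsAddHaarMeasure := by
    rw [L.toLinearEquiv.finrank_eq]; infer_instance
  refine ⟨Measure.addHaarScalarFactor (μH[finrank ℝ F] : Measure V) (μ.map L), ?_⟩
  have hrange : range Φ = range ι := by rw [hΦι, range_comp, L.surjective.range_eq, image_univ]
  rw [hrange, ← hι.map_hausdorffMeasure (Or.inl (Nat.cast_nonneg _))]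
  conv_lhs => rw [Measure.isAddLeftInvariant_eq_smul (μH[finrank ℝ F] : Measure V) (μ.map L)]
  rw [Measure.map_smul, Measure.map_map hι.continuous.measurable L.continuous.measurable, ← hΦι]

theorem exists_setIntegral_image_eq_mul (Φ : F →ᵃ[ℝ] E) (hΦ : Function.Injective Φ) :
    ∃ c : ℝ, ∀ (s : Set F) (g : E → ℝ),
      ∫ x in Φ '' s, g x ∂μH[finrank ℝ F] = c * ∫ y in s, g (Φ y) ∂μ := by
  obtain ⟨c, hc⟩ := exists_hausdorffMeasure_restrict_range_eq_smul_map μ Φ hΦ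
  have hemb : MeasurableEmbedding Φ := by
    have hlin := LinearMap.isClosedEmbedding_of_injective
      (LinearMap.ker_eq_bot.2 (Φ.linear_injective_iff.2 hΦ))
    rw [Φ.decomp]
    exact ((Homeomorph.addRight (Φ 0)).isClosedEmbedding.comp hlin).measurableEmbedding
  refine ⟨c, fun s g => ?_⟩
  rw [← Measure.restrict_restrict_of_subset (image_subset_range Φ s), hc, Measure.restrict_smul,
    integral_smul_nnreal_measure, hemb.setIntegral_map, preimage_image_eq s hΦ, NNReal.smul_def,
    smul_eq_mul]

end HausdorffMeasure

theorem exists_setIntegral_convexHull_eq_mul {E : Type*} [NormedAddCommGroup E] [NormedSpace ℝ E]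
    [MeasurableSpace E] [BorelSpace E] {p : Fin 3 → E} (hp : AffineIndependent ℝ p) :
    ∃ c : ℝ, ∀ g : E → ℝ,
      ∫ x in convexHull ℝ (range p), g x ∂μH[2]
        = c * ∫ st in unitTriangle, g (triangleMap p st) := by
  obtain ⟨c, hc⟩ :=
    exists_setIntegral_image_eq_mul volume (triangleMap p) (triangleMap_injective hp)
  refine ⟨c, fun g => ?_⟩
  have h2 : ((finrank ℝ (ℝ × ℝ) : ℕ) : ℝ) = 2 := by simp
  rw [← image_triangleMap_unitTriangle, ← hc, h2]

theorem MvPolynomial.eval_sum_smul_of_totalDegree_le_one_s1 {R σ ι : Type*} [CommRing R]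
    {p : MvPolynomial σ R} (hp : p.totalDegree ≤ 1) (s : Finset ι) (w : ι → R)
    (hw : ∑ k ∈ s, w k = 1) (x : ι → σ → R) :
    eval (∑ k ∈ s, w k • x k) p = ∑ k ∈ s, w k * eval (x k) p := by
  have hmon : ∀ m ∈ p.support, eval (∑ k ∈ s, w k • x k) (monomial m (coeff m p)) =
      ∑ k ∈ s, w k * eval (x k) (monomial m (coeff m p)) := by
    intro m hm
    have hdeg : m.degree ≤ 1 := le_totalDegree hm |>.trans hp
    rcases Nat.le_one_iff_eq_zero_or_eq_one.1 hdeg with h | h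
    · rw [(Finsupp.degree_eq_zero_iff m).1 h]
      simp [← Finset.sum_mul, hw]
    · obtain ⟨j, rfl⟩ : m ∈ range (Finsupp.single · 1) := Finsupp.range_single_one ▸ h
      simp only [eval_monomial, Finsupp.prod_single_index, pow_zero, pow_one, Finset.sum_apply,
        Pi.smul_apply, smul_eq_mul, Finset.mul_sum]
      exact Finset.sum_congr rfl fun k _ => by ring
  conv_lhs => rw [p.as_sum]
  rw [map_sum, Finset.sum_congr rfl hmon, Finset.sum_comm]
  refine Finset.sum_congr rfl fun k _ => ?_
  conv_rhs => rw [p.as_sum]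
  rw [map_sum, Finset.mul_sum]

theorem evalP_triangleMap {q : MvPolynomial (Fin 3) ℝ} (hq : q.totalDegree ≤ 1) (p : Fin 3 → E3)
    (st : ℝ × ℝ) :
    evalP (triangleMap p st) q
      = (1 - st.1 - st.2) * evalP (p 0) q + st.1 * evalP (p 1) q + st.2 * evalP (p 2) q := by
  have hx : (fun j => triangleMap p st j) = ∑ k, ![1 - st.1 - st.2, st.1, st.2] k • ⇑(p k) := by
    ext j; simp [triangleMap_apply, Fin.sum_univ_three]
  rw [evalP, hx, eval_sum_smul_of_totalDegree_le_one_s1 hq _ _ (by simp [Fin.sum_univ_three]; ring)]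
  simp [Fin.sum_univ_three, evalP]

def bubble (lam : Fin 4 → MvPolynomial (Fin 3) ℝ) (i : Fin 4) : MvPolynomial (Fin 3) ℝ :=
  (-2) * lam i ^ 2 + 4 * lam i - 2 + 3 * ∑ j ∈ Finset.univ.erase i, lam j ^ 2
    + 30 * ∏ j ∈ Finset.univ.erase i, lam j

theorem evalP_bubble (x : E3) (lam : Fin 4 → MvPolynomial (Fin 3) ℝ) (i : Fin 4) :
    evalP x (bubble lam i) = (-2) * evalP x (lam i) ^ 2 + 4 * evalP x (lam i) - 2
      + 3 * ∑ j ∈ Finset.univ.erase i, evalP x (lam j) ^ 2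
      + 30 * ∏ j ∈ Finset.univ.erase i, evalP x (lam j) := by
  simp only [bubble, evalP, map_add, map_sub, map_mul, map_pow, map_sum, map_prod, map_neg,
    map_ofNat]

theorem bubble_comp_perm (lam : Fin 4 → MvPolynomial (Fin 3) ℝ) (σ : Equiv.Perm (Fin 4))
    (i : Fin 4) : bubble (lam ∘ σ) i = bubble lam (σ i) := by
  have hmem : ∀ j, j ∈ Finset.univ.erase i ↔ σ j ∈ Finset.univ.erase (σ i) := by simp
  simp only [bubble, Function.comp_apply]
  rw [Finset.sum_equiv σ hmem (g := fun j => lam j ^ 2) fun _ _ => rfl,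
    Finset.prod_equiv σ hmem (g := lam) fun _ _ => rfl]

theorem face_comp_perm (a : Fin 4 → E3) (σ : Equiv.Perm (Fin 4)) (F : Fin 4) :
    face (a ∘ σ) F = face a (σ F) := by
  simp only [face, image_comp]
  congr 2
  ext j
  simp [Equiv.image_eq_preimage_symm, Equiv.symm_apply_eq]

theorem exists_perm_apply_eq_and_or {α : Type*} [DecidableEq α] {a b : α} (hab : a ≠ b) (i F : α) :
    ∃ σ : Equiv.Perm α, σ b = F ∧ (σ a = i ∨ σ b = i) := by
  by_cases h : i = F
  · exact ⟨Equiv.swap F b, Equiv.swap_apply_right _ _, Or.inr (by rw [Equiv.swap_apply_right, h])⟩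
  · have hi : Equiv.swap F b i ≠ b := by
      rwa [Ne, Equiv.swap_apply_eq_iff, Equiv.swap_apply_right]
    refine ⟨Equiv.swap F b * Equiv.swap (Equiv.swap F b i) a, ?_, Or.inl ?_⟩
    · rw [Equiv.Perm.mul_apply, Equiv.swap_apply_of_ne_of_ne hi.symm hab.symm,
        Equiv.swap_apply_right]
    · rw [Equiv.Perm.mul_apply, Equiv.swap_apply_right, Equiv.swap_apply_self]

theorem integral_face_three_bubble_mul_eq_zero {a : Fin 4 → E3} (hind : AffineIndependent ℝ a)
    {lam : Fin 4 → MvPolynomial (Fin 3) ℝ} (hdeg : ∀ i, (lam i).totalDegree ≤ 1)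
    (hval : ∀ i j, evalP (a j) (lam i) = if i = j then 1 else 0) {i : Fin 4} (hi : i = 0 ∨ i = 3)
    {q : MvPolynomial (Fin 3) ℝ} (hq : q.totalDegree ≤ 1) :
    ∫ x in face a 3, evalP x (bubble lam i) * evalP x q ∂μH[2] = 0 := by
  set p : Fin 3 → E3 := a ∘ Fin.castSucc
  obtain ⟨c, hc⟩ :=
    exists_setIntegral_convexHull_eq_mul (p := p) (hind.comp_embedding Fin.castSuccEmb)
  have hface : face a 3 = convexHull ℝ (range p) := by
    rw [face, range_comp, Fin.range_castSucc]
    congr 2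
    ext j
    simp [Fin.ext_iff]
    omega
  have hlam : ∀ st : ℝ × ℝ, ∀ j,
      evalP (triangleMap p st) (lam j) = ![1 - st.1 - st.2, st.1, st.2, 0] j := by
    intro st j
    fin_cases j <;> simp [evalP_triangleMap (hdeg _), hval, p]
  rw [hface, hc, ← mul_zero c]
  congr 1
  rcases hi with rfl | rfl
  · rw [← setIntegral_unitTriangle_adjacent_mul_affine_eq_zero (evalP (a 0) q) (evalP (a 1) q)
      (evalP (a 2) q)]
    congr 1
    ext st
    have hφ : evalP (triangleMap p st) (bubble lam 0) = st.1 ^ 2 + st.2 ^ 2 - 4 * st.1 * st.2 := by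
      rw [evalP_bubble, show Finset.univ.erase (0 : Fin 4) = {1, 2, 3} by decide]
      simp [hlam]
      ring
    rw [hφ, evalP_triangleMap hq]
    rfl
  · rw [← setIntegral_unitTriangle_opposite_mul_affine_eq_zero (evalP (a 0) q) (evalP (a 1) q)
      (evalP (a 2) q)]
    congr 1
    ext st
    have hφ : evalP (triangleMap p st) (bubble lam 3) = 3 * ((1 - st.1 - st.2) ^ 2 + st.1 ^ 2
        + st.2 ^ 2) - 2 + 30 * ((1 - st.1 - st.2) * st.1 * st.2) := by
      rw [evalP_bubble, show Finset.univ.erase (3 : Fin 4) = {0, 1, 2} by decide]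
      simp [hlam]
      ring
    rw [hφ, evalP_triangleMap hq]
    rfl

/-- the bubbles `φᵢ = −2λᵢ² + 4λᵢ − 2 + 3∑_{j≠i}λⱼ² + 30∏_{j≠i}λⱼ`
have vanishing first-order moments on every facet. -/
theorem stmt1 (a : Fin 4 → E3) (hind : AffineIndependent ℝ a)
    (lam : Fin 4 → MvPolynomial (Fin 3) ℝ)
    (hdeg : ∀ i, (lam i).totalDegree ≤ 1)
    (hval : ∀ i j, evalP (a j) (lam i) = if i = j then 1 else 0)
    (i : Fin 4) :
    ∀ (F : Fin 4) (q : MvPolynomial (Fin 3) ℝ), q.totalDegree ≤ 1 →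
      ∫ x in face a F,
        evalP x ((-2) * lam i ^ 2 + 4 * lam i - 2
            + 3 * ∑ j ∈ Finset.univ.erase i, lam j ^ 2
            + 30 * ∏ j ∈ Finset.univ.erase i, lam j) * evalP x q ∂(μH[2]) = 0 := by
  intro F q hq
  obtain ⟨σ, hσF, hσi⟩ := exists_perm_apply_eq_and_or (by decide : (0 : Fin 4) ≠ 3) i F
  have key := integral_face_three_bubble_mul_eq_zero (a := a ∘ σ) (lam := lam ∘ σ)
    (hind.comp_embedding σ.toEmbedding) (fun _ => hdeg _)
    (fun _ _ => by simp [hval, σ.injective.eq_iff])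
    (i := σ.symm i) (by rcases hσi with h | h <;> simp [← h]) hq
  rwa [face_comp_perm, bubble_comp_perm, Equiv.apply_symm_apply, hσF] at key
end
end
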